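/- arXiv:1811.06707 — 3 statements merged into one kernel-verified Lean document; each statement's English description precedes it below -/
import Mathlib

section
/- Let X be a normed space and I a nontrivial ideal on ℕ. A sequence (x_n) in X is weakly I^I-convergent to x if and only if it is weakly I-convergent to x. -/
open Classical Filter

/-- An ideal on ℕ: contains ∅, closed under subsets and finite unions. -/
def IsIdeal (I : Set (Set ℕ)) : Prop :=
  ∅ ∈ I ∧ (∀ A B : Set ℕ, A ∈ I → B ⊆ A → B ∈ I) ∧
    (∀ A B : Set ℕ, A ∈ I → B ∈ I → A ∪ B ∈ I)

/-- A nontrivial (proper) ideal. -/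
def NontrivialIdeal (I : Set (Set ℕ)) : Prop :=
  IsIdeal I ∧ Set.univ ∉ I ∧ I ≠ {∅}

/-- An admissible ideal: nontrivial and containing all singletons. -/
def AdmissibleIdeal (I : Set (Set ℕ)) : Prop :=
  NontrivialIdeal I ∧ ∀ n : ℕ, ({n} : Set ℕ) ∈ I

/-- The modified sequence: `x n` on `M`, the constant `a` off `M`. -/
noncomputable def modSeq {X : Type*} (M : Set ℕ) (x : ℕ → X) (a : X) : ℕ → X :=
  fun n => if n ∈ M then x n else a

/-- Weak `K`-convergence of a sequence in a normed space. -/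
def WeakConv {X : Type*} [NormedAddCommGroup X] [NormedSpace ℝ X]
    (K : Set (Set ℕ)) (x : ℕ → X) (a : X) : Prop :=
  ∀ f : X →L[ℝ] ℝ, ∀ ε : ℝ, 0 < ε → {n : ℕ | ε ≤ |f (x n) - f a|} ∈ K

/-- Weak `I^K`-convergence: some `M` in the dual filter of `I` such that the
modified sequence is weakly `K`-convergent. -/
def WeakIK {X : Type*} [NormedAddCommGroup X] [NormedSpace ℝ X]
    (I K : Set (Set ℕ)) (x : ℕ → X) (a : X) : Prop :=
  ∃ M : Set ℕ, Mᶜ ∈ I ∧ WeakConv K (modSeq M x a) a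

/-- Ordinary weak convergence. -/
def WeakTendsto {X : Type*} [NormedAddCommGroup X] [NormedSpace ℝ X]
    (x : ℕ → X) (a : X) : Prop :=
  ∀ f : X →L[ℝ] ℝ, Tendsto (fun n => f (x n)) atTop (nhds (f a))

/-- Weak* `K`-convergence of a sequence of continuous linear functionals. -/
def WeakStarConv {X : Type*} [NormedAddCommGroup X] [NormedSpace ℝ X]
    (K : Set (Set ℕ)) (f : ℕ → X →L[ℝ] ℝ) (g : X →L[ℝ] ℝ) : Prop :=
  ∀ x : X, ∀ ε : ℝ, 0 < ε → {n : ℕ | ε ≤ |f n x - g x|} ∈ K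

/-- Weak* `I^K`-convergence. -/
def WeakStarIK {X : Type*} [NormedAddCommGroup X] [NormedSpace ℝ X]
    (I K : Set (Set ℕ)) (f : ℕ → X →L[ℝ] ℝ) (g : X →L[ℝ] ℝ) : Prop :=
  ∃ M : Set ℕ, Mᶜ ∈ I ∧ WeakStarConv K (modSeq M f g) g

/-- Ordinary weak* convergence (pointwise on X). -/
def WeakStarTendsto {X : Type*} [NormedAddCommGroup X] [NormedSpace ℝ X]
    (f : ℕ → X →L[ℝ] ℝ) (g : X →L[ℝ] ℝ) : Prop :=
  ∀ x : X, Tendsto (fun n => f n x) atTop (nhds (g x))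

/-- The join of two ideals: `{A ∪ B : A ∈ I, B ∈ K}`. -/
def idealJoin (I K : Set (Set ℕ)) : Set (Set ℕ) :=
  {C | ∃ A ∈ I, ∃ B ∈ K, C = A ∪ B}

theorem stmt_1 {X : Type*} [NormedAddCommGroup X] [NormedSpace ℝ X]
    (I : Set (Set ℕ)) (hI : NontrivialIdeal I)
    (x : ℕ → X) (a : X) : WeakIK I I x a ↔ WeakConv I x a := by
  obtain ⟨⟨hemp, hsub, hun⟩, -, -⟩ := hI
  constructor
  · rintro ⟨M, hM, hconv⟩ f ε hε
    have h := hconv f ε hε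
    have hU := hun _ _ h hM
    refine hsub _ _ hU ?_
    intro n hn
    by_cases hnM : n ∈ M
    · left
      simpa [modSeq, hnM] using hn
    · right; exact hnM
  · intro h
    refine ⟨Set.univ, by simpa using hemp, ?_⟩
    intro f ε hε
    simpa [modSeq] using h f ε hε
end

section
/- Let I and K be ideals on ℕ with I ⊆ K. If a sequence (x_n) in a normed space X is weakly I-convergent to x, then it is weakly I^K-convergent to x. -/
open Classical Filter

@[simp]
theorem modSeq_univ {X : Type*} (x : ℕ → X) (a : X) : modSeq Set.univ x a = x := by
  funext n
  simp [modSeq]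

section WeakConv

variable {X : Type*} [NormedAddCommGroup X] [NormedSpace ℝ X]

theorem WeakConv.mono {K₁ K₂ : Set (Set ℕ)} {x : ℕ → X} {a : X} (hK : K₁ ⊆ K₂)
    (h : WeakConv K₁ x a) : WeakConv K₂ x a :=
  fun f ε hε => hK (h f ε hε)

theorem WeakConv.weakIK {I K : Set (Set ℕ)} {x : ℕ → X} {a : X} (hI : ∅ ∈ I)
    (h : WeakConv K x a) : WeakIK I K x a :=
  ⟨Set.univ, by simpa using hI, by simpa using h⟩

end WeakConv

theorem stmt_4_general {X : Type*} [NormedAddCommGroup X] [NormedSpace ℝ X]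
    (I K : Set (Set ℕ)) (hI : IsIdeal I)
    (hsub : I ⊆ K) (x : ℕ → X) (a : X)
    (h : WeakConv I x a) : WeakIK I K x a :=
  (h.mono hsub).weakIK hI.1

theorem stmt_4 {X : Type*} [NormedAddCommGroup X] [NormedSpace ℝ X]
    (I K : Set (Set ℕ)) (hI : IsIdeal I) (hK : IsIdeal K)
    (hsub : I ⊆ K) (x : ℕ → X) (a : X)
    (h : WeakConv I x a) : WeakIK I K x a :=
  stmt_4_general I K hI hsub x a h
end

section
/- Let I and K be ideals on ℕ such that the join I ∨ K = {A ∪ B : A ∈ I, B ∈ K} is a nontrivial (proper) ideal on ℕ, and let X be a real normed space. If a sequence (x_n) in X is weakly I^K-convergent to both x and y, then x = y. -/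
open Classical Filter

/-! Separate `x ≠ y` by a functional `f` (Hahn–Banach) and put `ε = |f x - f y| / 2`. Outside
the two exceptional sets (in `I`), `f (z n)` cannot be `ε`-close to both `f x` and `f y`, while
the sets where it is `ε`-far from either lie in `K`; so `ℕ` would be a set of `I` joined with a
set of `K`. -/

theorem IsIdeal.union_mem {I : Set (Set ℕ)} (hI : IsIdeal I) {A B : Set ℕ} (hA : A ∈ I)
    (hB : B ∈ I) : A ∪ B ∈ I :=
  hI.2.2 A B hA hB

theorem half_abs_sub_le_abs_sub_or (a b t : ℝ) :
    |a - b| / 2 ≤ |t - a| ∨ |a - b| / 2 ≤ |t - b| := by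
  by_contra! h
  have := abs_sub_le a t b
  rw [abs_sub_comm a t] at this
  linarith [h.1, h.2]

theorem modSeq_of_mem {X : Type*} {M : Set ℕ} {n : ℕ} (hn : n ∈ M) (x : ℕ → X) (a : X) :
    modSeq M x a n = x n :=
  if_pos hn

theorem univ_mem_idealJoin_of_weakIK {X : Type*} [NormedAddCommGroup X] [NormedSpace ℝ X]
    {I K : Set (Set ℕ)} (hI : IsIdeal I) (hK : IsIdeal K) {z : ℕ → X} {x y : X}
    (hx : WeakIK I K z x) (hy : WeakIK I K z y) (f : X →L[ℝ] ℝ) (hf : f x ≠ f y) :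
    Set.univ ∈ idealJoin I K := by
  obtain ⟨M₁, hM₁, hW₁⟩ := hx
  obtain ⟨M₂, hM₂, hW₂⟩ := hy
  have hε : 0 < |f x - f y| / 2 := by positivity [sub_ne_zero.2 hf]
  refine ⟨M₁ᶜ ∪ M₂ᶜ, hI.union_mem hM₁ hM₂, _,
    hK.union_mem (hW₁ f _ hε) (hW₂ f _ hε), (Set.eq_univ_of_forall fun n => ?_).symm⟩
  by_cases hn : n ∈ M₁ ∩ M₂
  · right
    simpa only [Set.mem_union, Set.mem_ofPred_eq, modSeq_of_mem hn.1, modSeq_of_mem hn.2]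
      using half_abs_sub_le_abs_sub_or (f x) (f y) (f (z n))
  · left
    rwa [← Set.compl_inter]

theorem stmt_7 {X : Type*} [NormedAddCommGroup X] [NormedSpace ℝ X]
    (I K : Set (Set ℕ)) (hI : IsIdeal I) (hK : IsIdeal K)
    (hjoin : Set.univ ∉ idealJoin I K)
    (z : ℕ → X) (x y : X)
    (hx : WeakIK I K z x) (hy : WeakIK I K z y) : x = y := by
  refine (SeparatingDual.eq_iff_forall_dual_eq (R := ℝ)).2 fun f => ?_
  by_contra hf
  exact hjoin (univ_mem_idealJoin_of_weakIK hI hK hx hy f hf)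
end
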